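/- The Rogers-Szegő polynomials satisfy the second-order even-step recurrence r_n(s,q) = (1 + (1+q) q^{n-2} s + s^2) r_{n-2}(s,q) - (1 - q^{n-3})(1 - q^{n-2}) s^2 r_{n-4}(s,q) for n >= 4. -/

import Mathlib

open Finset

/-- Gaussian (q-)binomial coefficient, defined over any commutative ring by the
Pascal-type recurrence `[n+1, k+1] = [n, k] + q^(k+1) * [n, k+1]`. -/
def qbinom {R : Type*} [CommRing R] (q : R) : ℕ → ℕ → R
  | _, 0 => 1
  | 0, _ + 1 => 0
  | n + 1, k + 1 => qbinom q n k + q ^ (k + 1) * qbinom q n (k + 1)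
/-- Rogers-Szegő polynomial `r_n(s,q) = ∑_{j=0}^n [n,j]_q s^j`. -/
def rs {R : Type*} [CommRing R] (n : ℕ) (s q : R) : R :=
  ∑ j ∈ Finset.range (n + 1), qbinom q n j * s ^ j

/-!
Pascal's rule together with `(1 - q^(k+1)) [n+1, k+1] = (1 - q^(n+1)) [n, k]` gives the
three-term recurrence `r_{n+2} = (1 + s) r_{n+1} - (1 - q^(n+1)) s r_n`. Applying it at
`n + 2`, `n + 1` and `n` and eliminating the odd-index terms `r_{n+3}` and `r_{n+1}`
yields the even-step recurrence.
-/

section QBinom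

variable {R : Type*} [CommRing R] (q : R)

@[simp]
lemma qbinom_zero_right (n : ℕ) : qbinom q n 0 = 1 := by
  cases n <;> rfl

lemma qbinom_succ_succ (n k : ℕ) :
    qbinom q (n + 1) (k + 1) = qbinom q n k + q ^ (k + 1) * qbinom q n (k + 1) := rfl

lemma qbinom_eq_zero_of_lt {n k : ℕ} (h : n < k) : qbinom q n k = 0 := by
  induction n generalizing k with
  | zero =>
    cases k with
    | zero => omega
    | succ k => rfl
  | succ n ih =>
    cases k with
    | zero => omega
    | succ k => rw [qbinom_succ_succ, ih (by omega), ih (by omega), mul_zero, add_zero]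

lemma qbinom_one_right (n : ℕ) : qbinom q n 1 = ∑ i ∈ range n, q ^ i := by
  induction n with
  | zero => rfl
  | succ n ih =>
    rw [qbinom_succ_succ, ih, qbinom_zero_right, sum_range_succ', mul_sum, add_comm, pow_zero,
      zero_add, pow_one]
    exact congrArg (· + 1) (sum_congr rfl fun i _ => (pow_succ' q i).symm)

lemma one_sub_pow_mul_qbinom_succ_succ (n k : ℕ) :
    (1 - q ^ (k + 1)) * qbinom q (n + 1) (k + 1) = (1 - q ^ (n + 1)) * qbinom q n k := by
  induction n generalizing k with
  | zero =>
    cases k with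
    | zero => simp [qbinom]
    | succ k => simp [qbinom]
  | succ n ih =>
    cases k with
    | zero =>
      rw [qbinom_one_right, qbinom_zero_right, mul_one, zero_add, pow_one, mul_neg_geom_sum]
    | succ k =>
      linear_combination (1 - q ^ (k + 2)) * qbinom_succ_succ q (n + 1) (k + 1)
        + q ^ (k + 2) * ih (k + 1) + q * ih k - q * (1 - q ^ (n + 1)) * qbinom_succ_succ q n k

end QBinom

section RogersSzego

variable {R : Type*} [CommRing R] (s q : R)

lemma rs_eq_sum_range {n N : ℕ} (h : n < N) :
    rs n s q = ∑ j ∈ range N, qbinom q n j * s ^ j := by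
  refine sum_subset (range_subset_range.2 h) fun j _ hjn => ?_
  rw [qbinom_eq_zero_of_lt q (by simpa using hjn), zero_mul]

lemma rs_succ_succ (n : ℕ) :
    rs (n + 2) s q = (1 + s) * rs (n + 1) s q - (1 - q ^ (n + 1)) * s * rs n s q := by
  have pascal (i : ℕ) : qbinom q (n + 2) (i + 1) * s ^ (i + 1)
      = s * (qbinom q (n + 1) i * s ^ i) + qbinom q (n + 1) (i + 1) * s ^ (i + 1)
        - (1 - q ^ (n + 1)) * s * (qbinom q n i * s ^ i) := by
    linear_combination s ^ (i + 1) * qbinom_succ_succ q (n + 1) i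
      - s ^ (i + 1) * one_sub_pow_mul_qbinom_succ_succ q n i
  have shifted :
      rs (n + 1) s q = ∑ i ∈ range (n + 2), qbinom q (n + 1) (i + 1) * s ^ (i + 1) + 1 := by
    rw [rs_eq_sum_range s q (N := n + 3) (by omega), sum_range_succ', qbinom_zero_right,
      one_mul, pow_zero, sum_range_succ, qbinom_eq_zero_of_lt q (by omega), zero_mul, add_zero]
  have unfold_n := rs_eq_sum_range s q (N := n + 2) (by omega : n < n + 2)
  have unfold_succ : rs (n + 1) s q = ∑ j ∈ range (n + 2), qbinom q (n + 1) j * s ^ j := rfl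
  rw [rs, sum_range_succ', qbinom_zero_right, pow_zero, one_mul]
  simp only [pascal, sum_sub_distrib, sum_add_distrib, ← mul_sum]
  rw [← unfold_n, ← unfold_succ, shifted]
  ring

end RogersSzego

theorem stmt5 {R : Type*} [CommRing R] (s q : R) (n : ℕ) (hn : 4 ≤ n) :
    rs n s q = (1 + (1 + q) * q ^ (n - 2) * s + s ^ 2) * rs (n - 2) s q
      - (1 - q ^ (n - 3)) * (1 - q ^ (n - 2)) * s ^ 2 * rs (n - 4) s q := by
  obtain ⟨m, rfl⟩ := Nat.exists_eq_add_of_le' hn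
  rw [show m + 4 - 2 = m + 2 by omega, show m + 4 - 3 = m + 1 by omega, Nat.add_sub_cancel]
  linear_combination rs_succ_succ s q (m + 2) + (1 + s) * rs_succ_succ s q (m + 1)
    + (1 - q ^ (m + 2)) * s * rs_succ_succ s q m
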